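/- arXiv:1912.09791 — 3 statements merged into one kernel-verified Lean document; each statement's English description precedes it below -/
import Mathlib

section
/- Let L = ⊕_{i∈ℤ} L_i be a ℤ-graded vector space over a field of characteristic zero, with data l₀ ∈ L₁, maps l₁, l₂, l₃ of degree 1 as in the context, and π ∈ L₀. Assume the following instances (at π) of the generalized Jacobi identities of a curved L∞-algebra with brackets l₀, l₁, l₂, l₃: (J0) l₁(l₀) = 0; (J1) l₂(l₀, π) + l₁(l₁(π)) = 0; (J2) l₃(l₀, π, π) + 2 l₂(l₁(π), π) + l₁(l₂(π, π)) = 0; (J3) 3 l₃(l₁(π), π, π) + 3 l₂(l₂(π, π), π) + l₁(l₃(π, π, π)) = 0; (J4) 6 l₃(l₂(π, π), π, π) + 4 l₂(l₃(π, π, π), π) = 0; (J5) l₃(l₃(π, π, π), π, π) = 0. Then the twisted unary bracket annihilates the twisted curvature: D(Π) = l₁(Π) − l₂(π, Π) + ½ l₃(π, π, Π) = 0, where Π = l₀ − l₁(π) + ½ l₂(π, π) − ⅙ l₃(π, π, π). (This is the first step in proving that the twisting by π of a curved L∞-algebra is again a curved L∞-algebra.) -/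
/-- Let `L = ⊕_{i∈ℤ} L_i` be a ℤ-graded vector space over a field of characteristic
zero, carrying a curved `L∞`-structure with brackets `l₀ ∈ L₁` and graded symmetric
brackets `l₁, l₂, l₃` of degree `1`, and let `π ∈ L₀`.  Assuming the instances
(J0)–(J5) (at `π`) of the generalized Jacobi identities, the twisted unary bracket
`D(Y) = l₁(Y) − l₂(π, Y) + ½ l₃(π, π, Y)` annihilates the twisted curvature
`Π = l₀ − l₁(π) + ½ l₂(π, π) − ⅙ l₃(π, π, π)`, i.e. `D(Π) = 0`. -/
theorem twisted_unary_annihilates_twisted_curvature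
    {K V : Type*} [Field K] [CharZero K] [AddCommGroup V] [Module K V]
    (Lsub : ℤ → Submodule K V) (hL : DirectSum.IsInternal Lsub)
    (l0 : V) (hl0 : l0 ∈ Lsub 1)
    (l1 : V →ₗ[K] V)
    (hl1 : ∀ (p : ℤ), ∀ v ∈ Lsub p, l1 v ∈ Lsub (p + 1))
    (l2 : V →ₗ[K] V →ₗ[K] V)
    (hl2 : ∀ (p q : ℤ), ∀ v ∈ Lsub p, ∀ w ∈ Lsub q, l2 v w ∈ Lsub (p + q + 1))
    (hl2sym : ∀ (p q : ℤ), ∀ v ∈ Lsub p, ∀ w ∈ Lsub q,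
      l2 w v = ((-1 : K) ^ (p * q)) • l2 v w)
    (l3 : V →ₗ[K] V →ₗ[K] V →ₗ[K] V)
    (hl3 : ∀ (p q r : ℤ), ∀ u ∈ Lsub p, ∀ v ∈ Lsub q, ∀ w ∈ Lsub r,
      l3 u v w ∈ Lsub (p + q + r + 1))
    (hl3sym12 : ∀ (p q : ℤ), ∀ u ∈ Lsub p, ∀ v ∈ Lsub q, ∀ w : V,
      l3 v u w = ((-1 : K) ^ (p * q)) • l3 u v w)
    (hl3sym23 : ∀ (q r : ℤ), ∀ u : V, ∀ v ∈ Lsub q, ∀ w ∈ Lsub r,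
      l3 u w v = ((-1 : K) ^ (q * r)) • l3 u v w)
    (piv : V) (hpiv : piv ∈ Lsub 0)
    (J0 : l1 l0 = 0)
    (J1 : l2 l0 piv + l1 (l1 piv) = 0)
    (J2 : l3 l0 piv piv + (2 : K) • l2 (l1 piv) piv + l1 (l2 piv piv) = 0)
    (J3 : (3 : K) • l3 (l1 piv) piv piv + (3 : K) • l2 (l2 piv piv) piv
            + l1 (l3 piv piv piv) = 0)
    (J4 : (6 : K) • l3 (l2 piv piv) piv piv + (4 : K) • l2 (l3 piv piv piv) piv = 0)
    (J5 : l3 (l3 piv piv piv) piv piv = 0) :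
    let Pi : V := l0 - l1 piv + (2 : K)⁻¹ • l2 piv piv - (6 : K)⁻¹ • l3 piv piv piv
    l1 Pi - l2 piv Pi + (2 : K)⁻¹ • l3 piv piv Pi = 0 := by
  intro Pi
  have s1 : l2 piv l0 = l2 l0 piv := by simpa using hl2sym 1 0 l0 hl0 piv hpiv
  have s2 : l2 piv (l1 piv) = l2 (l1 piv) piv := by
    simpa using hl2sym 1 0 (l1 piv) (by simpa using hl1 0 piv hpiv) piv hpiv
  have s3 : l2 piv (l2 piv piv) = l2 (l2 piv piv) piv := by
    simpa using hl2sym 1 0 (l2 piv piv) (by simpa using hl2 0 0 piv hpiv piv hpiv) piv hpiv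
  have s4 : l2 piv (l3 piv piv piv) = l2 (l3 piv piv piv) piv := by
    simpa using hl2sym 1 0 (l3 piv piv piv)
      (by simpa using hl3 0 0 0 piv hpiv piv hpiv piv hpiv) piv hpiv
  have tgen : ∀ x ∈ Lsub 1, l3 piv piv x = l3 x piv piv := by
    intro x hx
    have h1 : l3 piv x piv = l3 x piv piv := by simpa using hl3sym12 1 0 x hx piv hpiv piv
    have h2 : l3 piv piv x = l3 piv x piv := by simpa using (hl3sym23 0 1 piv piv hpiv x hx).symm
    rw [h2, h1]
  have t1 : l3 piv piv l0 = l3 l0 piv piv := tgen l0 hl0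
  have t2 : l3 piv piv (l1 piv) = l3 (l1 piv) piv piv :=
    tgen (l1 piv) (by simpa using hl1 0 piv hpiv)
  have t3 : l3 piv piv (l2 piv piv) = l3 (l2 piv piv) piv piv :=
    tgen (l2 piv piv) (by simpa using hl2 0 0 piv hpiv piv hpiv)
  have t4 : l3 piv piv (l3 piv piv piv) = l3 (l3 piv piv piv) piv piv :=
    tgen (l3 piv piv piv) (by simpa using hl3 0 0 0 piv hpiv piv hpiv piv hpiv)
  show l1 Pi - l2 piv Pi + (2 : K)⁻¹ • l3 piv piv Pi = 0
  simp only [Pi, map_sub, map_add, map_smul, s1, s2, s3, s4, t1, t2, t3, t4]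
  linear_combination (norm := module) J0 - J1 + (2 : K)⁻¹ • J2 - (6 : K)⁻¹ • J3
    + (24 : K)⁻¹ • J4 - (12 : K)⁻¹ • J5
end

section
/- Let L = ⊕_{i∈ℤ} L_i be a ℤ-graded vector space over a field of characteristic zero, with data l₀ ∈ L₁, maps l₁, l₂, l₃ of degree 1 as in the context, π ∈ L₀, and a homogeneous element X ∈ L_x. Assume the following instances of the generalized Jacobi identities of a curved L∞-algebra with brackets l₀, l₁, l₂, l₃, evaluated at tuples consisting of X and copies of π (all Koszul signs are +1 since π has degree 0): (a) l₂(l₀, X) + l₁(l₁(X)) = 0; (b) l₃(l₀, π, X) + l₂(l₁(π), X) + l₂(l₁(X), π) + l₁(l₂(π, X)) = 0; (c) 2 l₃(l₁(π), π, X) + l₃(l₁(X), π, π) + l₂(l₂(π, π), X) + 2 l₂(l₂(π, X), π) + l₁(l₃(π, π, X)) = 0; (d) 3 l₃(l₂(π, π), π, X) + 3 l₃(l₂(π, X), π, π) + l₂(l₃(π, π, π), X) + 3 l₂(l₃(π, π, X), π) = 0; (e) 4 l₃(l₃(π, π, π), π, X) + 6 l₃(l₃(π, π, X), π, π) = 0.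 Then the twisted brackets satisfy the corresponding Jacobi identity: l₂(Π, X) − l₃(π, Π, X) + D(D(X)) = 0, where Π = l₀ − l₁(π) + ½ l₂(π, π) − ⅙ l₃(π, π, π) and D(Y) = l₁(Y) − l₂(π, Y) + ½ l₃(π, π, Y). (This is the second step in proving that the twisting by π of a curved L∞-algebra is again a curved L∞-algebra.) -/
/-- Let `L = ⊕_{i∈ℤ} L_i` be a ℤ-graded vector space over a field of characteristic
zero, carrying a curved `L∞`-structure with brackets `l₀ ∈ L₁` and graded symmetric
brackets `l₁, l₂, l₃` of degree `1`, let `π ∈ L₀` and let `X ∈ L_x` be homogeneous.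
Assuming the instances (a)–(e) of the generalized Jacobi identities (evaluated at
tuples consisting of `X` and copies of `π`), the twisted brackets satisfy the
corresponding Jacobi identity: `l₂(Π, X) − l₃(π, Π, X) + D(D(X)) = 0`, where
`Π = l₀ − l₁(π) + ½ l₂(π, π) − ⅙ l₃(π, π, π)` and
`D(Y) = l₁(Y) − l₂(π, Y) + ½ l₃(π, π, Y)`. -/
theorem twisted_jacobi_one_argument
    {K V : Type*} [Field K] [CharZero K] [AddCommGroup V] [Module K V]
    (Lsub : ℤ → Submodule K V) (hL : DirectSum.IsInternal Lsub)
    (l0 : V) (hl0 : l0 ∈ Lsub 1)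
    (l1 : V →ₗ[K] V)
    (hl1 : ∀ (p : ℤ), ∀ v ∈ Lsub p, l1 v ∈ Lsub (p + 1))
    (l2 : V →ₗ[K] V →ₗ[K] V)
    (hl2 : ∀ (p q : ℤ), ∀ v ∈ Lsub p, ∀ w ∈ Lsub q, l2 v w ∈ Lsub (p + q + 1))
    (hl2sym : ∀ (p q : ℤ), ∀ v ∈ Lsub p, ∀ w ∈ Lsub q,
      l2 w v = ((-1 : K) ^ (p * q)) • l2 v w)
    (l3 : V →ₗ[K] V →ₗ[K] V →ₗ[K] V)
    (hl3 : ∀ (p q r : ℤ), ∀ u ∈ Lsub p, ∀ v ∈ Lsub q, ∀ w ∈ Lsub r,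
      l3 u v w ∈ Lsub (p + q + r + 1))
    (hl3sym12 : ∀ (p q : ℤ), ∀ u ∈ Lsub p, ∀ v ∈ Lsub q, ∀ w : V,
      l3 v u w = ((-1 : K) ^ (p * q)) • l3 u v w)
    (hl3sym23 : ∀ (q r : ℤ), ∀ u : V, ∀ v ∈ Lsub q, ∀ w ∈ Lsub r,
      l3 u w v = ((-1 : K) ^ (q * r)) • l3 u v w)
    (piv : V) (hpiv : piv ∈ Lsub 0)
    (x : ℤ) (X : V) (hX : X ∈ Lsub x)
    (ha : l2 l0 X + l1 (l1 X) = 0)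
    (hb : l3 l0 piv X + l2 (l1 piv) X + l2 (l1 X) piv + l1 (l2 piv X) = 0)
    (hc : (2 : K) • l3 (l1 piv) piv X + l3 (l1 X) piv piv + l2 (l2 piv piv) X
            + (2 : K) • l2 (l2 piv X) piv + l1 (l3 piv piv X) = 0)
    (hd : (3 : K) • l3 (l2 piv piv) piv X + (3 : K) • l3 (l2 piv X) piv piv
            + l2 (l3 piv piv piv) X + (3 : K) • l2 (l3 piv piv X) piv = 0)
    (he : (4 : K) • l3 (l3 piv piv piv) piv X
            + (6 : K) • l3 (l3 piv piv X) piv piv = 0) :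
    let Pi : V := l0 - l1 piv + (2 : K)⁻¹ • l2 piv piv - (6 : K)⁻¹ • l3 piv piv piv
    let D : V → V := fun Y => l1 Y - l2 piv Y + (2 : K)⁻¹ • l3 piv piv Y
    l2 Pi X - l3 piv Pi X + D (D X) = 0 := by

  intro Pi D
  have h1p : l1 piv ∈ Lsub (0 + 1) := hl1 0 piv hpiv
  have h1X : l1 X ∈ Lsub (x + 1) := hl1 x X hX
  have h2pp : l2 piv piv ∈ Lsub (0 + 0 + 1) := hl2 0 0 piv hpiv piv hpiv
  have h2pX : l2 piv X ∈ Lsub (0 + x + 1) := hl2 0 x piv hpiv X hX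
  have h3ppp : l3 piv piv piv ∈ Lsub (0 + 0 + 0 + 1) :=
    hl3 0 0 0 piv hpiv piv hpiv piv hpiv
  have h3ppX : l3 piv piv X ∈ Lsub (0 + 0 + x + 1) :=
    hl3 0 0 x piv hpiv piv hpiv X hX
  have s2 : ∀ (q : ℤ), ∀ w ∈ Lsub q, l2 w piv = l2 piv w := by
    intro q w hw
    rw [hl2sym 0 q piv hpiv w hw]; simp
  have s3a : ∀ (p : ℤ), ∀ u ∈ Lsub p, ∀ w : V, l3 piv u w = l3 u piv w := by
    intro p u hu w
    rw [hl3sym12 p 0 u hu piv hpiv w]; simp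
  have s3b : ∀ (r : ℤ), ∀ w ∈ Lsub r, l3 piv piv w = l3 w piv piv := by
    intro r w hw
    have h1 : l3 piv w piv = l3 piv piv w := by
      rw [hl3sym23 0 r piv piv hpiv w hw]; simp
    rw [← h1, s3a r w hw piv]
  rw [← s3a 1 l0 hl0 X, s2 (x + 1) (l1 X) h1X] at hb
  rw [← s3a (0 + 1) (l1 piv) h1p X, ← s3b (x + 1) (l1 X) h1X,
      s2 (0 + x + 1) (l2 piv X) h2pX] at hc
  rw [← s3a (0 + 0 + 1) (l2 piv piv) h2pp X, ← s3b (0 + x + 1) (l2 piv X) h2pX,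
      s2 (0 + 0 + x + 1) (l3 piv piv X) h3ppX] at hd
  rw [← s3a (0 + 0 + 0 + 1) (l3 piv piv piv) h3ppp X,
      ← s3b (0 + 0 + x + 1) (l3 piv piv X) h3ppX] at he
  simp only [Pi, D, map_add, map_sub, map_smul, LinearMap.add_apply,
    LinearMap.sub_apply, LinearMap.smul_apply]
  linear_combination (norm := module) ha - hb + (2 : K)⁻¹ • hc
    - (6 : K)⁻¹ • hd + (24 : K)⁻¹ • he
end

section
/- Let L = ⊕_{i∈ℤ} L_i be a ℤ-graded vector space over a field of characteristic zero, with data l₀ ∈ L₁, maps l₁, l₂, l₃ of degree 1 as in the context, π ∈ L₀, and homogeneous elements X₁ ∈ L_{x₁}, X₂ ∈ L_{x₂}. Assume the following instances of the generalized Jacobi identities of a curved L∞-algebra with brackets l₀, l₁, l₂, l₃, evaluated at tuples consisting of X₁, X₂ and copies of π (the only nontrivial Koszul sign is (−1)^{x₁x₂}, arising from swapping X₁ and X₂): (H2) l₃(l₀, X₁, X₂) + l₂(l₁(X₁), X₂) + (−1)^{x₁x₂} l₂(l₁(X₂), X₁) + l₁(l₂(X₁, X₂)) = 0; (H3) l₃(l₁(π),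 X₁, X₂) + l₃(l₁(X₁), π, X₂) + (−1)^{x₁x₂} l₃(l₁(X₂), π, X₁) + l₂(l₂(π, X₁), X₂) + (−1)^{x₁x₂} l₂(l₂(π, X₂), X₁) + l₂(l₂(X₁, X₂), π) + l₁(l₃(π, X₁, X₂)) = 0; (H4) l₃(l₂(π, π), X₁, X₂) + 2 l₃(l₂(π, X₁), π, X₂) + 2(−1)^{x₁x₂} l₃(l₂(π, X₂), π, X₁) + l₃(l₂(X₁, X₂), π, π) + l₂(l₃(π, π, X₁), X₂) + (−1)^{x₁x₂} l₂(l₃(π, π, X₂), X₁) + 2 l₂(l₃(π, X₁, X₂), π) = 0; (H5) l₃(l₃(π, π, π), X₁, X₂) + 3 l₃(l₃(π, π, X₁), π, X₂) + 3(−1)^{x₁x₂} l₃(l₃(π, π, X₂), π, X₁) + 3 l₃(l₃(π, X₁, X₂), π, π) = 0. Then the twisted brackets satisfy the corresponding Jacobi identity: l₃(Π, X₁, X₂) + D(l₂(X₁, X₂) − l₃(π, X₁, X₂)) + l₂(D(X₁), X₂) − l₃(π, D(X₁), X₂) + (−1)^{x₁x₂}( l₂(D(X₂), X₁) − l₃(π,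 D(X₂), X₁) ) = 0, where Π = l₀ − l₁(π) + ½ l₂(π, π) − ⅙ l₃(π, π, π) and D(Y) = l₁(Y) − l₂(π, Y) + ½ l₃(π, π, Y). (This is the third step in proving that the twisting by π of a curved L∞-algebra is again a curved L∞-algebra.) -/
/-- Let `L = ⊕_{i∈ℤ} L_i` be a ℤ-graded vector space over a field of characteristic
zero, carrying a curved `L∞`-structure with brackets `l₀ ∈ L₁` and graded symmetric
brackets `l₁, l₂, l₃` of degree `1`, let `π ∈ L₀` and let `X₁ ∈ L_{x₁}`, `X₂ ∈ L_{x₂}`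
be homogeneous.  Assuming the instances (H2)–(H5) of the generalized Jacobi identities
(evaluated at tuples consisting of `X₁`, `X₂` and copies of `π`; the only nontrivial
Koszul sign is `ε = (−1)^{x₁x₂}`), the twisted brackets satisfy the corresponding
Jacobi identity:
`l₃(Π, X₁, X₂) + D(l₂(X₁, X₂) − l₃(π, X₁, X₂)) + l₂(D(X₁), X₂) − l₃(π, D(X₁), X₂)
  + ε (l₂(D(X₂), X₁) − l₃(π, D(X₂), X₁)) = 0`,
where `Π = l₀ − l₁(π) + ½ l₂(π, π) − ⅙ l₃(π, π, π)` and
`D(Y) = l₁(Y) − l₂(π, Y) + ½ l₃(π, π, Y)`. -/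
theorem twisted_jacobi_two_arguments
    {K V : Type*} [Field K] [CharZero K] [AddCommGroup V] [Module K V]
    (Lsub : ℤ → Submodule K V) (hL : DirectSum.IsInternal Lsub)
    (l0 : V) (hl0 : l0 ∈ Lsub 1)
    (l1 : V →ₗ[K] V)
    (hl1 : ∀ (p : ℤ), ∀ v ∈ Lsub p, l1 v ∈ Lsub (p + 1))
    (l2 : V →ₗ[K] V →ₗ[K] V)
    (hl2 : ∀ (p q : ℤ), ∀ v ∈ Lsub p, ∀ w ∈ Lsub q, l2 v w ∈ Lsub (p + q + 1))
    (hl2sym : ∀ (p q : ℤ), ∀ v ∈ Lsub p, ∀ w ∈ Lsub q,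
      l2 w v = ((-1 : K) ^ (p * q)) • l2 v w)
    (l3 : V →ₗ[K] V →ₗ[K] V →ₗ[K] V)
    (hl3 : ∀ (p q r : ℤ), ∀ u ∈ Lsub p, ∀ v ∈ Lsub q, ∀ w ∈ Lsub r,
      l3 u v w ∈ Lsub (p + q + r + 1))
    (hl3sym12 : ∀ (p q : ℤ), ∀ u ∈ Lsub p, ∀ v ∈ Lsub q, ∀ w : V,
      l3 v u w = ((-1 : K) ^ (p * q)) • l3 u v w)
    (hl3sym23 : ∀ (q r : ℤ), ∀ u : V, ∀ v ∈ Lsub q, ∀ w ∈ Lsub r,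
      l3 u w v = ((-1 : K) ^ (q * r)) • l3 u v w)
    (piv : V) (hpiv : piv ∈ Lsub 0)
    (x₁ x₂ : ℤ) (X₁ X₂ : V) (hX₁ : X₁ ∈ Lsub x₁) (hX₂ : X₂ ∈ Lsub x₂)
    (H2 : l3 l0 X₁ X₂ + l2 (l1 X₁) X₂ + ((-1 : K) ^ (x₁ * x₂)) • l2 (l1 X₂) X₁
            + l1 (l2 X₁ X₂) = 0)
    (H3 : l3 (l1 piv) X₁ X₂ + l3 (l1 X₁) piv X₂
            + ((-1 : K) ^ (x₁ * x₂)) • l3 (l1 X₂) piv X₁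
            + l2 (l2 piv X₁) X₂ + ((-1 : K) ^ (x₁ * x₂)) • l2 (l2 piv X₂) X₁
            + l2 (l2 X₁ X₂) piv + l1 (l3 piv X₁ X₂) = 0)
    (H4 : l3 (l2 piv piv) X₁ X₂ + (2 : K) • l3 (l2 piv X₁) piv X₂
            + ((2 : K) * (-1 : K) ^ (x₁ * x₂)) • l3 (l2 piv X₂) piv X₁
            + l3 (l2 X₁ X₂) piv piv + l2 (l3 piv piv X₁) X₂
            + ((-1 : K) ^ (x₁ * x₂)) • l2 (l3 piv piv X₂) X₁
            + (2 : K) • l2 (l3 piv X₁ X₂) piv = 0)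
    (H5 : l3 (l3 piv piv piv) X₁ X₂ + (3 : K) • l3 (l3 piv piv X₁) piv X₂
            + ((3 : K) * (-1 : K) ^ (x₁ * x₂)) • l3 (l3 piv piv X₂) piv X₁
            + (3 : K) • l3 (l3 piv X₁ X₂) piv piv = 0) :
    let Pi : V := l0 - l1 piv + (2 : K)⁻¹ • l2 piv piv - (6 : K)⁻¹ • l3 piv piv piv
    let D : V → V := fun Y => l1 Y - l2 piv Y + (2 : K)⁻¹ • l3 piv piv Y
    l3 Pi X₁ X₂ + D (l2 X₁ X₂ - l3 piv X₁ X₂)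
      + l2 (D X₁) X₂ - l3 piv (D X₁) X₂
      + ((-1 : K) ^ (x₁ * x₂)) • (l2 (D X₂) X₁ - l3 piv (D X₂) X₁) = 0 := by

  have sw2 : ∀ (m : ℤ) (Z : V), Z ∈ Lsub m → l2 piv Z = l2 Z piv := by
    intro m Z hZ
    rw [hl2sym m 0 Z hZ piv hpiv, mul_zero, zpow_zero, one_smul]
  have sw3a : ∀ (m : ℤ) (Z : V), Z ∈ Lsub m → ∀ W : V, l3 piv Z W = l3 Z piv W := by
    intro m Z hZ W
    rw [hl3sym12 0 m piv hpiv Z hZ W, zero_mul, zpow_zero, one_smul]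
  have sw3b : ∀ (m : ℤ) (Z : V), Z ∈ Lsub m → l3 piv piv Z = l3 Z piv piv := by
    intro m Z hZ
    rw [hl3sym23 m 0 piv Z hZ piv hpiv, mul_zero, zpow_zero, one_smul,
      sw3a m Z hZ piv]
  intro Pi D
  simp only [Pi, D, map_sub, map_add, map_smul, LinearMap.sub_apply,
    LinearMap.add_apply, LinearMap.smul_apply, smul_sub, smul_add]
  rw [sw2 _ _ (hl2 _ _ _ hX₁ _ hX₂), sw2 _ _ (hl3 _ _ _ _ hpiv _ hX₁ _ hX₂),
    sw3b _ _ (hl2 _ _ _ hX₁ _ hX₂), sw3b _ _ (hl3 _ _ _ _ hpiv _ hX₁ _ hX₂),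
    sw3a _ _ (hl1 _ _ hX₁) X₂, sw3a _ _ (hl1 _ _ hX₂) X₁,
    sw3a _ _ (hl2 _ _ _ hpiv _ hX₁) X₂, sw3a _ _ (hl2 _ _ _ hpiv _ hX₂) X₁,
    sw3a _ _ (hl3 _ _ _ _ hpiv _ hpiv _ hX₁) X₂, sw3a _ _ (hl3 _ _ _ _ hpiv _ hpiv _ hX₂) X₁]
  linear_combination (norm := module) H2 - H3 + (2 : K)⁻¹ • H4 - (6 : K)⁻¹ • H5
end
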